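/- arXiv:2511.20204 — 2 statements merged into one kernel-verified Lean document; each statement's English description precedes it below -/
import Mathlib

section
/- Let R be a commutative ring and Q a finite acyclic quiver. If P and P' are projective RQ-modules (representations of Q by R-modules), then their vertexwise tensor product P ⊠ P', defined by (P ⊠ P')_i = P_i ⊗_R P'_i and (P ⊠ P')_α = P_α ⊗ P'_α, is again a projective RQ-module. -/
open CategoryTheory

variable (R : Type) [CommRing R] (V : Type) [Quiver.{0} V]

/-- A representation of the quiver `V` over the commutative ring `R`
(equivalently, a module over the path algebra `RV`): an `R`-module at each
vertex and an `R`-linear map for each arrow. -/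
structure QuivRep : Type 1 where
  M : V → Type
  [isAddCommGroup : ∀ v, AddCommGroup (M v)]
  [isModule : ∀ v, Module R (M v)]
  map : ∀ {i j : V}, (i ⟶ j) → (M i →ₗ[R] M j)

attribute [instance] QuivRep.isAddCommGroup QuivRep.isModule

namespace QuivRep
variable {R V}

/-- Morphisms of quiver representations. -/
@[ext]
structure Hom (X Y : QuivRep R V) : Type where
  app : ∀ v, X.M v →ₗ[R] Y.M v
  comm : ∀ {i j : V} (a : i ⟶ j), (app j).comp (X.map a) = (Y.map a).comp (app i)

instance : Category.{0} (QuivRep R V) where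
  Hom X Y := Hom X Y
  id X := ⟨fun _ => LinearMap.id, fun a => by rw [LinearMap.id_comp, LinearMap.comp_id]⟩
  comp f g := ⟨fun v => (g.app v).comp (f.app v), fun a => by
    rw [LinearMap.comp_assoc, f.comm a, ← LinearMap.comp_assoc, g.comm a, LinearMap.comp_assoc]⟩
  id_comp f := by apply Hom.ext; funext v; exact LinearMap.comp_id _
  comp_id f := by apply Hom.ext; funext v; exact LinearMap.id_comp _
  assoc f g h := by apply Hom.ext; funext v; rfl

variable (R V)

/-- The vertexwise tensor product `X ⊠ Y` of two representations. -/
noncomputable def tensor (X Y : QuivRep R V) : QuivRep R V where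
  M v := TensorProduct R (X.M v) (Y.M v)
  map a := TensorProduct.map (X.map a) (Y.map a)

/-- The unit representation `U`: the module `R` at every vertex and the
identity map on every arrow. -/
def unit : QuivRep R V where
  M _ := R
  map _ := LinearMap.id

/-- The representation `i_× M` with the module `M` at the vertex `i` and `0`
at all other vertices (all arrow maps are zero).  Here the component at `v`
is realized as `PLift (v = i) →₀ M`, which is `M` if `v = i` and `0`
otherwise.  In particular `vertexRep R V i R` is the representation `U(i)`. -/
noncomputable def vertexRep (i : V) (M : Type) [AddCommGroup M] [Module R M] : QuivRep R V where
  M v := PLift (v = i) →₀ M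
  map _ := 0

/-- The projective representation `P(i)`: at a vertex `k` it is the free
`R`-module on the set of paths from `i` to `k`, and arrows act by
path composition. -/
noncomputable def proj (i : V) : QuivRep R V where
  M k := Quiver.Path i k →₀ R
  map a := Finsupp.lmapDomain R R (fun p => p.cons a)

/-- The indexing type of arrows with target `i`. -/
def In (i : V) : Type := Σ j : V, j ⟶ i

/-- The canonical map `⊕_{α : j → i} P_j → P_i` induced by the structure maps. -/
noncomputable def incoming (P : QuivRep R V) (i : V) :
    (DirectSum (In V i) (fun σ => P.M σ.1)) →ₗ[R] P.M i := by
  classical exact DirectSum.toModule R _ _ (fun σ => P.map σ.2)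

/-- The quiver `V` is acyclic: the only path from a vertex to itself is trivial. -/
def Acyclic : Prop := ∀ (i : V) (p : Quiver.Path i i), p = Quiver.Path.nil

end QuivRep

open QuivRep

/-!
A representation `P` is a quotient of the linearization of the free set-valued representation
on its underlying graded set, and if `P` is projective it is a retract of it. The tensor
product of two linearizations is the linearization of the vertexwise product, and a product
of two free set-valued representations is a retract of a free one: a pair of paths with a
common target factors through their longest common final segment, compatibly with extending
both paths by an arrow. So `P ⊠ P'` is a retract of a linearized free representation, and
those are projective, being direct sums of the representations `P(i)` spanned by the paths
starting at `i`.
-/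

namespace Quiver.Path

variable {Q : Type*} [Quiver Q]

/-- `commonSuffix p q = ⟨v, (p₀, q₀), r⟩` where `r : Path v k` is the longest common final
segment of `p` and `q`, so that `p = p₀.comp r` and `q = q₀.comp r`. -/
noncomputable def commonSuffix : ∀ {i j k : Q}, Path i k → Path j k →
    Σ v : Q, (Path i v × Path j v) × Path v k
  | _, _, k, nil, q => ⟨k, (nil, q), nil⟩
  | _, _, k, cons p a, nil => ⟨k, (p.cons a, nil), nil⟩
  | _, _, k, cons (b := x) p a, cons (b := y) q b =>
    open scoped Classical in
    if h : (⟨x, a⟩ : Σ' v : Q, v ⟶ k) = ⟨y, b⟩ then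
      have hxy : x = y := congrArg PSigma.fst h
      let d := commonSuffix p (q.cast rfl hxy.symm)
      ⟨d.1, d.2.1, d.2.2.cons a⟩
    else ⟨k, (p.cons a, q.cons b), nil⟩

lemma commonSuffix_cons_cons {i j x k : Q} (p : Path i x) (q : Path j x) (a : x ⟶ k) :
    commonSuffix (p.cons a) (q.cons a) =
      ⟨(commonSuffix p q).1, (commonSuffix p q).2.1, (commonSuffix p q).2.2.cons a⟩ := by
  rw [commonSuffix, dif_pos rfl]
  rfl

lemma comp_commonSuffix {i k : Q} (p : Path i k) : ∀ {j : Q} (q : Path j k),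
    (commonSuffix p q).2.1.1.comp (commonSuffix p q).2.2 = p ∧
      (commonSuffix p q).2.1.2.comp (commonSuffix p q).2.2 = q := by
  induction p with
  | nil => intro j q; rw [commonSuffix]; exact ⟨rfl, rfl⟩
  | cons p a ih =>
    intro j q
    cases q with
    | nil => rw [commonSuffix]; exact ⟨rfl, rfl⟩
    | cons q b =>
      by_cases h : (⟨_, a⟩ : Σ' v : Q, v ⟶ _) = ⟨_, b⟩
      · obtain ⟨rfl, hab⟩ := PSigma.mk.inj_iff.mp h
        obtain rfl := eq_of_heq hab
        rw [commonSuffix_cons_cons]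
        obtain ⟨hp, hq⟩ := ih q
        exact ⟨by rw [comp_cons, hp], by rw [comp_cons, hq]⟩
      · rw [commonSuffix, dif_neg h]
        exact ⟨rfl, rfl⟩

end Quiver.Path

structure QuivSet : Type 1 where
  S : V → Type
  act : ∀ {i j : V}, (i ⟶ j) → S i → S j

namespace QuivSet

variable {V}

def pathAct (X : QuivSet V) {i : V} : ∀ {k : V}, Quiver.Path i k → X.S i → X.S k
  | _, .nil, x => x
  | _, .cons p a, x => X.act a (X.pathAct p x)

lemma pathAct_cons (X : QuivSet V) {i j k : V} (p : Quiver.Path i j) (a : j ⟶ k)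
    (x : X.S i) : X.pathAct (p.cons a) x = X.act a (X.pathAct p x) := rfl

structure Hom (X Y : QuivSet V) where
  toFun : ∀ v, X.S v → Y.S v
  map_act : ∀ {i j : V} (a : i ⟶ j) (x : X.S i),
    toFun j (X.act a x) = Y.act a (toFun i x)

variable {X Y : QuivSet V}

lemma Hom.map_pathAct (f : Hom X Y) {i k : V} (p : Quiver.Path i k) (x : X.S i) :
    f.toFun k (X.pathAct p x) = Y.pathAct p (f.toFun i x) := by
  induction p with
  | nil => rfl
  | cons p a ih => rw [pathAct_cons, f.map_act, ih, pathAct_cons]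

abbrev free (G : V → Type) : QuivSet V where
  S k := Σ i, G i × Quiver.Path i k
  act a g := ⟨g.1, g.2.1, g.2.2.cons a⟩

lemma free_pathAct {G : V → Type} {i k : V} (p : Quiver.Path i k) (g : (free G).S i) :
    (free G).pathAct p g = ⟨g.1, g.2.1, g.2.2.comp p⟩ := by
  induction p with
  | nil => rfl
  | cons p a ih => rw [pathAct_cons, ih]; rfl

def freeLift {G : V → Type} (X : QuivSet V) (x : ∀ v, G v → X.S v) : Hom (free G) X where
  toFun _ g := X.pathAct g.2.2 (x g.1 g.2.1)
  map_act _ _ := rfl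

def eval (X : QuivSet V) : Hom (free X.S) X := freeLift X fun _ => id

abbrev prod (X Y : QuivSet V) : QuivSet V where
  S k := X.S k × Y.S k
  act a z := (X.act a z.1, Y.act a z.2)

lemma prod_pathAct {i k : V} (p : Quiver.Path i k) (z : (prod X Y).S i) :
    (prod X Y).pathAct p z = (X.pathAct p z.1, Y.pathAct p z.2) := by
  induction p with
  | nil => rfl
  | cons p a ih => rw [pathAct_cons, ih]; rfl

noncomputable def prodFreeSplitting (G G' : V → Type) :
    Hom (prod (free G) (free G')) (free (prod (free G) (free G')).S) where
  toFun _ z :=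
    let d := Quiver.Path.commonSuffix z.1.2.2 z.2.2.2
    ⟨d.1, (⟨z.1.1, z.1.2.1, d.2.1.1⟩, ⟨z.2.1, z.2.2.1, d.2.1.2⟩), d.2.2⟩
  map_act a z := by
    obtain ⟨⟨i, x, p⟩, ⟨j, y, q⟩⟩ := z
    dsimp only [prod, free]
    rw [Quiver.Path.commonSuffix_cons_cons]

lemma eval_prodFreeSplitting (G G' : V → Type) {k : V} (z : (prod (free G) (free G')).S k) :
    (eval _).toFun k ((prodFreeSplitting G G').toFun k z) = z := by
  obtain ⟨⟨i, x, p⟩, ⟨j, y, q⟩⟩ := z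
  obtain ⟨hp, hq⟩ := Quiver.Path.comp_commonSuffix p q
  dsimp only [eval, freeLift, prodFreeSplitting]
  rw [prod_pathAct, free_pathAct, free_pathAct]
  exact Prod.ext (congrArg (fun r => (⟨i, x, r⟩ : (free G).S k)) hp)
    (congrArg (fun r => (⟨j, y, r⟩ : (free G').S k)) hq)

end QuivSet

namespace QuivRep

variable {R V}

lemma hom_ext_iff_app {X Y : QuivRep R V} {f g : X ⟶ Y} :
    f = g ↔ ∀ v x, Hom.app f v x = Hom.app g v x := by
  refine ⟨fun h _ _ => h ▸ rfl, fun h => Hom.ext (funext fun v => LinearMap.ext (h v))⟩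

noncomputable def coker {X Y : QuivRep R V} (f : X ⟶ Y) : QuivRep R V where
  M v := Y.M v ⧸ LinearMap.range (Hom.app f v)
  map a := Submodule.mapQ _ _ (Y.map a) <| by
    rintro _ ⟨x, rfl⟩
    exact ⟨X.map a x, LinearMap.congr_fun (Hom.comm f a) x⟩

noncomputable def coker.π {X Y : QuivRep R V} (f : X ⟶ Y) : Y ⟶ coker f where
  app _ := Submodule.mkQ _
  comm _ := rfl

def zeroHom (X Y : QuivRep R V) : X ⟶ Y where
  app _ := 0
  comm _ := by simp

lemma epi_iff_surjective {X Y : QuivRep R V} (f : X ⟶ Y) :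
    Epi f ↔ ∀ v, Function.Surjective (Hom.app f v) := by
  refine ⟨fun _ v y => ?_, fun h => ⟨fun g g' hgg' => hom_ext_iff_app.mpr fun v y => ?_⟩⟩
  · have hπ : coker.π f = zeroHom _ _ := by
      rw [← cancel_epi f, hom_ext_iff_app]
      intro v x
      exact (Submodule.Quotient.mk_eq_zero _).mpr ⟨x, rfl⟩
    exact (Submodule.Quotient.mk_eq_zero _).mp (hom_ext_iff_app.mp hπ v y)
  · obtain ⟨x, rfl⟩ := h v y
    exact hom_ext_iff_app.mp hgg' v x

abbrev toQuivSet (P : QuivRep R V) : QuivSet V where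
  S := P.M
  act a := P.map a

abbrev toQuivSetHom {P Q : QuivRep R V} (f : P ⟶ Q) : QuivSet.Hom P.toQuivSet Q.toQuivSet where
  toFun v := Hom.app f v
  map_act a := LinearMap.congr_fun (Hom.comm f a)

noncomputable def isoMk {X Y : QuivRep R V} (e : ∀ v, X.M v ≃ₗ[R] Y.M v)
    (comm : ∀ {i j : V} (a : i ⟶ j),
      (e j).toLinearMap.comp (X.map a) = (Y.map a).comp (e i).toLinearMap) :
    X ≅ Y where
  hom := ⟨fun v => e v, comm⟩
  inv := ⟨fun v => (e v).symm, fun {i j} a => LinearMap.ext fun y => (e j).injective <| by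
    simpa using (LinearMap.congr_fun (comm a) ((e i).symm y)).symm⟩
  hom_inv_id := Hom.ext <| funext fun v => LinearMap.ext (e v).symm_apply_apply
  inv_hom_id := Hom.ext <| funext fun v => LinearMap.ext (e v).apply_symm_apply

noncomputable def tensorMap {X Y X' Y' : QuivRep R V} (f : X ⟶ Y) (f' : X' ⟶ Y') :
    tensor R V X X' ⟶ tensor R V Y Y' where
  app v := TensorProduct.map (Hom.app f v) (Hom.app f' v)
  comm a := (TensorProduct.map_comp _ _ _ _).symm.trans <|
    (congrArg₂ TensorProduct.map (Hom.comm f a) (Hom.comm f' a)).trans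
      (TensorProduct.map_comp _ _ _ _)

lemma tensorMap_comp {X Y Z X' Y' Z' : QuivRep R V} (f : X ⟶ Y) (g : Y ⟶ Z)
    (f' : X' ⟶ Y') (g' : Y' ⟶ Z') :
    tensorMap f f' ≫ tensorMap g g' = tensorMap (f ≫ g) (f' ≫ g') :=
  Hom.ext <| funext fun _ => (TensorProduct.map_comp _ _ _ _).symm

lemma tensorMap_id (X X' : QuivRep R V) : tensorMap (𝟙 X) (𝟙 X') = 𝟙 (tensor R V X X') :=
  Hom.ext <| funext fun _ => TensorProduct.map_id

noncomputable def tensorRetract {X Y X' Y' : QuivRep R V} (h : Retract X Y)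
    (h' : Retract X' Y') : Retract (tensor R V X X') (tensor R V Y Y') where
  i := tensorMap h.i h'.i
  r := tensorMap h.r h'.r
  retract := by rw [tensorMap_comp, h.retract, h'.retract, tensorMap_id]

end QuivRep

namespace QuivSet

variable {R V} {X Y : QuivSet V}

variable (R) in
noncomputable abbrev linearize (X : QuivSet V) : QuivRep R V where
  M k := X.S k →₀ R
  map a := Finsupp.lmapDomain R R (X.act a)

lemma linearize_hom_ext {P : QuivRep R V} {f g : linearize R X ⟶ P}
    (h : ∀ k s, Hom.app f k (Finsupp.single s 1) = Hom.app g k (Finsupp.single s 1)) : f = g :=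
  QuivRep.Hom.ext <| funext fun k => Finsupp.lhom_ext' fun s => LinearMap.ext_ring (h k s)

lemma pathAct_linearize_single {i k : V} (p : Quiver.Path i k) (s : X.S i) (r : R) :
    (linearize R X).toQuivSet.pathAct p (Finsupp.single s r) =
      Finsupp.single (X.pathAct p s) r := by
  induction p with
  | nil => rfl
  | cons p a ih =>
    rw [pathAct_cons, ih]
    exact Finsupp.mapDomain_single

noncomputable def linearizeMap (f : Hom X Y) : linearize R X ⟶ linearize R Y where
  app k := Finsupp.lmapDomain R R (f.toFun k)
  comm a := Finsupp.lhom_ext' fun s => LinearMap.ext_ring <| by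
    simp [linearize, f.map_act]

noncomputable def linearizeRetract (f : Hom X Y) (g : Hom Y X)
    (hgf : ∀ k x, g.toFun k (f.toFun k x) = x) : Retract (linearize R X) (linearize R Y) where
  i := linearizeMap f
  r := linearizeMap g
  retract := linearize_hom_ext fun k s => by
    change Finsupp.mapDomain (g.toFun k) (Finsupp.mapDomain (f.toFun k) (Finsupp.single s 1)) = _
    rw [Finsupp.mapDomain_single, Finsupp.mapDomain_single, hgf]
    rfl

noncomputable def linearizeLift {P : QuivRep R V} (f : Hom X P.toQuivSet) :
    linearize R X ⟶ P where
  app k := Finsupp.linearCombination R (f.toFun k)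
  comm a := Finsupp.lhom_ext' fun s => LinearMap.ext_ring <| by
    simp [linearize, f.map_act]

lemma linearizeLift_single {P : QuivRep R V} (f : Hom X P.toQuivSet) {k : V}
    (s : X.S k) (r : R) : Hom.app (linearizeLift f) k (Finsupp.single s r) = r • f.toFun k s :=
  Finsupp.linearCombination_single R r s

instance projective_linearize_free (G : V → Type) : Projective (linearize R (free G)) where
  factors {E X} f e he := by
    choose y hy using fun v (x : G v) =>
      (epi_iff_surjective e).mp he v (Hom.app f v (Finsupp.single ⟨v, x, .nil⟩ 1))
    refine ⟨linearizeLift (freeLift E.toQuivSet y), linearize_hom_ext fun k ⟨i, x, p⟩ => ?_⟩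
    calc Hom.app e k (Hom.app (linearizeLift (freeLift E.toQuivSet y)) k
          (Finsupp.single ⟨i, x, p⟩ 1))
        = Hom.app e k (E.toQuivSet.pathAct p (y i x)) := by
          rw [linearizeLift_single, one_smul]; rfl
      _ = X.toQuivSet.pathAct p (Hom.app f i (Finsupp.single ⟨i, x, .nil⟩ 1)) := by
        rw [← hy]; exact (toQuivSetHom e).map_pathAct p _
      _ = Hom.app f k (Finsupp.single ⟨i, x, p⟩ 1) := by
        rw [← (toQuivSetHom f).map_pathAct, pathAct_linearize_single, free_pathAct,
          Quiver.Path.nil_comp]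

noncomputable def tensorLinearizeIso (X Y : QuivSet V) :
    tensor R V (linearize R X) (linearize R Y) ≅ linearize R (X.prod Y) :=
  QuivRep.isoMk (fun k => finsuppTensorFinsupp' R (X.S k) (Y.S k)) fun a => by
    refine TensorProduct.ext <| Finsupp.lhom_ext' fun s => LinearMap.ext_ring <|
      Finsupp.lhom_ext' fun t => LinearMap.ext_ring ?_
    change finsuppTensorFinsupp' R _ _ (TensorProduct.map (Finsupp.lmapDomain R R (X.act a))
        (Finsupp.lmapDomain R R (Y.act a)) (Finsupp.single s 1 ⊗ₜ Finsupp.single t 1)) =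
      Finsupp.lmapDomain R R ((X.prod Y).act a)
        (finsuppTensorFinsupp' R _ _ (Finsupp.single s (1 : R) ⊗ₜ Finsupp.single t (1 : R)))
    simp [finsuppTensorFinsupp'_single_tmul_single]

end QuivSet

namespace QuivRep

variable {R V}

noncomputable def retractOfProjective (P : QuivRep R V) [Projective P] :
    Retract P (QuivSet.linearize R (QuivSet.free P.toQuivSet.S)) :=
  have : Epi (QuivSet.linearizeLift (R := R) (QuivSet.eval P.toQuivSet)) :=
    (epi_iff_surjective _).mpr fun k y => ⟨Finsupp.single ⟨k, y, .nil⟩ 1, by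
      rw [QuivSet.linearizeLift_single, one_smul]; rfl⟩
  { i := Projective.factorThru (𝟙 P) (QuivSet.linearizeLift (QuivSet.eval P.toQuivSet))
    r := QuivSet.linearizeLift (QuivSet.eval P.toQuivSet)
    retract := Projective.factorThru_comp _ _ }

end QuivRep

/-- Over a commutative ring `R` and a finite acyclic quiver,
the vertexwise tensor product of two projective representations is again
projective. -/
theorem tensor_projective
    [Fintype V] [∀ i j : V, Fintype (i ⟶ j)] (hQ : Acyclic V)
    (P P' : QuivRep R V) (hP : Projective P) (hP' : Projective P') :
    Projective (tensor R V P P') :=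
  ((tensorRetract (retractOfProjective P) (retractOfProjective P')).trans <|
    (Retract.ofIso (QuivSet.tensorLinearizeIso _ _)).trans <|
      QuivSet.linearizeRetract (QuivSet.prodFreeSplitting _ _) (QuivSet.eval _)
        fun _ => QuivSet.eval_prodFreeSplitting _ _).projective
end

section
/- Let Q be a finite acyclic quiver with at least two vertices that is connected, let R be a nonzero commutative ring, and let s be a source of Q. Let U(s) be the representation with U(s)_s = R and U(s)_k = 0 for k ≠ s, and let U be the unit representation (R at every vertex, identity on arrows). Then U(s) ⊠ U(s) ≅ U(s) while there is no isomorphism making U(s) rigid: concretely, Hom_{RQ}(U(s) ⊠ P(i), U) = 0 for every vertex i with i ≠ s, and U(s) ⊠ P(i) = 0 for i ≠ s, so the internal hom [U(s), U] vanishes although [U(s), U(s)] ≅ U(s) ≠ 0. -/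
open CategoryTheory

variable (R : Type) [CommRing R] (V : Type) [Quiver.{0} V]

open QuivRep

/-!
A representation concentrated at `s` with zero arrow maps stays so after tensoring with
anything. No nontrivial path ends at the source `s`, so `U(s) ⊠ P(i) = 0` for `i ≠ s`.
Connectedness and a second vertex give an arrow `a : s ⟶ j`, and then any morphism
`f : U(s) ⊠ X ⟶ U` satisfies `f_s = U(a) ∘ f_s = f_j ∘ (U(s) ⊠ X)(a) = 0`. On the other
hand `x ⊗ p ↦ x`, tensoring `U(s)` with the augmentation of `P(s)`, is a nonzero
morphism `U(s) ⊠ P(s) ⟶ U(s)`.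
-/

section Source

variable {V : Type} [Quiver.{0} V] {s : V}

theorem isEmpty_path_to_source (hs : ∀ j : V, IsEmpty (j ⟶ s)) {i : V} (hi : i ≠ s) :
    IsEmpty (Quiver.Path i s) := by
  constructor
  rintro (_ | ⟨_, a⟩)
  · exact hi rfl
  · exact (hs _).false a

theorem exists_arrow_from_source_of_path (hs : ∀ j : V, IsEmpty (j ⟶ s)) {t : V}
    (p : @Quiver.Path (Quiver.Symmetrify V) _ s t) (ht : t ≠ s) : ∃ j : V, Nonempty (s ⟶ j) := by
  induction p with
  | nil => exact absurd rfl ht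
  | @cons c _ _ a ih =>
    by_cases hc : c = s
    · subst hc
      rcases a with a | a
      · exact ⟨_, ⟨a⟩⟩
      · exact ((hs _).false a).elim
    · exact ih hc

theorem exists_arrow_from_source [Fintype V]
    (hconn : ∀ i j : Quiver.Symmetrify V, Nonempty (Quiver.Path i j))
    (hcard : 2 ≤ Fintype.card V) (hs : ∀ j : V, IsEmpty (j ⟶ s)) :
    ∃ j : V, Nonempty (s ⟶ j) :=
  have ⟨t, ht⟩ := Fintype.exists_ne_of_one_lt_card hcard s
  exists_arrow_from_source_of_path hs (hconn s t).some ht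

end Source

namespace QuivRep

variable {R : Type} [CommRing R] {V : Type} [Quiver.{0} V]

section ZeroMaps

variable {X Y : QuivRep R V}

def homOfMapEqZero (hX : ∀ {i j : V} (a : i ⟶ j), X.map a = 0)
    (hY : ∀ {i j : V} (a : i ⟶ j), Y.map a = 0) (f : ∀ v, X.M v →ₗ[R] Y.M v) : X ⟶ Y :=
  ⟨f, fun a => by rw [hX, hY, LinearMap.comp_zero, LinearMap.zero_comp]⟩

def isoOfMapEqZero (hX : ∀ {i j : V} (a : i ⟶ j), X.map a = 0)
    (hY : ∀ {i j : V} (a : i ⟶ j), Y.map a = 0) (e : ∀ v, X.M v ≃ₗ[R] Y.M v) : X ≅ Y where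
  hom := homOfMapEqZero hX hY fun v => (e v).toLinearMap
  inv := homOfMapEqZero hY hX fun v => (e v).symm.toLinearMap
  hom_inv_id := Hom.ext <| funext fun v => LinearMap.ext (e v).symm_apply_apply
  inv_hom_id := Hom.ext <| funext fun v => LinearMap.ext (e v).apply_symm_apply

theorem Hom.app_eq_zero_of_map_eq_zero (f : X ⟶ unit R V) {i j : V} (a : i ⟶ j)
    (ha : X.map a = 0) : f.app i = 0 := by
  have h := f.comm a
  rw [ha, LinearMap.comp_zero] at h
  exact h.symm

end ZeroMaps

section VertexRep

variable {M N : Type} [AddCommGroup M] [Module R M] [AddCommGroup N] [Module R N]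

theorem vertexRep_map (i : V) {j k : V} (a : j ⟶ k) : (vertexRep R V i M).map a = 0 :=
  rfl

theorem tensor_vertexRep_map (i : V) (Y : QuivRep R V) {j k : V} (a : j ⟶ k) :
    (tensor R V (vertexRep R V i M) Y).map a = 0 :=
  TensorProduct.map_zero_left _

theorem subsingleton_vertexRep_M {i v : V} (h : v ≠ i) :
    Subsingleton ((vertexRep R V i M).M v) :=
  have : IsEmpty (PLift (v = i)) := ⟨fun p => h p.down⟩
  Finsupp.instSubsingleton

theorem subsingleton_tensor_vertexRep_proj_M {i s : V} [IsEmpty (Quiver.Path i s)] (v : V) :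
    Subsingleton ((tensor R V (vertexRep R V s M) (proj R V i)).M v) := by
  by_cases hv : v = s
  · subst hv
    have : Subsingleton ((proj R V i).M v) := Finsupp.instSubsingleton
    exact TensorProduct.uniqueRight.instSubsingleton
  · have := subsingleton_vertexRep_M (R := R) (M := M) hv
    exact TensorProduct.uniqueLeft.instSubsingleton

noncomputable def vertexRepCongr (i : V) (e : M ≃ₗ[R] N) :
    vertexRep R V i M ≅ vertexRep R V i N :=
  isoOfMapEqZero (vertexRep_map i) (vertexRep_map i) fun _ => Finsupp.mapRange.linearEquiv e

noncomputable def vertexRepTensorIso (i : V) :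
    tensor R V (vertexRep R V i M) (vertexRep R V i N) ≅ vertexRep R V i (TensorProduct R M N) :=
  isoOfMapEqZero (tensor_vertexRep_map i _) (vertexRep_map i) fun _ =>
    (finsuppTensorFinsupp R R M N _ _).trans (Finsupp.domLCongr subsingletonProdSelfEquiv)

theorem subsingleton_hom_tensor_vertexRep_unit {i j : V} (a : i ⟶ j) (Y : QuivRep R V) :
    Subsingleton (tensor R V (vertexRep R V i M) Y ⟶ unit R V) := by
  suffices h : ∀ (f : tensor R V (vertexRep R V i M) Y ⟶ unit R V) v, f.app v = 0 from
    ⟨fun f g => Hom.ext <| funext fun v => (h f v).trans (h g v).symm⟩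
  intro f v
  by_cases hv : v = i
  · subst hv
    exact Hom.app_eq_zero_of_map_eq_zero f a (tensor_vertexRep_map v Y a)
  · have := subsingleton_vertexRep_M (R := R) (M := M) hv
    exact Subsingleton.elim (α := TensorProduct R _ _ →ₗ[R] R) _ _

noncomputable def projAugmentation (i v : V) : (proj R V i).M v →ₗ[R] R :=
  Finsupp.linearCombination R fun _ => 1

theorem projAugmentation_single (i v : V) (p : Quiver.Path i v) (r : R) :
    projAugmentation i v (Finsupp.single p r : (proj R V i).M v) = r :=
  (Finsupp.linearCombination_single R _ _).trans (mul_one r)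

noncomputable def tensorProjAugmentation (i : V) (M : Type) [AddCommGroup M] [Module R M] :
    tensor R V (vertexRep R V i M) (proj R V i) ⟶ vertexRep R V i M :=
  homOfMapEqZero (tensor_vertexRep_map i _) (vertexRep_map i) fun v =>
    (TensorProduct.rid R _).toLinearMap ∘ₗ LinearMap.lTensor _ (projAugmentation i v)

/- The elements are typed through `vertexRep` and `proj` so that the instances agree with those
of `tensor`; for the same reason the rewriting is done with explicit `trans` steps. -/
theorem tensorProjAugmentation_app_tmul_nil (i : V) (m : M) :
    (tensorProjAugmentation i M).app i
      ((Finsupp.single (PLift.up rfl) m : (vertexRep R V i M).M i) ⊗ₜ[R]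
        (Finsupp.single Quiver.Path.nil 1 : (proj R V i).M i)) =
      Finsupp.single (PLift.up rfl) m := by
  refine (congrArg (TensorProduct.rid R _) (LinearMap.lTensor_tmul _ _ _ _)).trans ?_
  refine (TensorProduct.rid_tmul _ _).trans ?_
  rw [projAugmentation_single]
  exact one_smul R _

theorem not_subsingleton_hom_tensor_vertexRep_proj [Nontrivial M] (i : V) :
    ¬ Subsingleton (tensor R V (vertexRep R V i M) (proj R V i) ⟶ vertexRep R V i M) := by
  intro h
  obtain ⟨m, hm⟩ := exists_ne (0 : M)
  have hsingle := congrArg (fun f : tensor R V (vertexRep R V i M) (proj R V i) ⟶ _ =>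
      f.app i ((Finsupp.single (PLift.up rfl) m : (vertexRep R V i M).M i) ⊗ₜ[R]
        (Finsupp.single Quiver.Path.nil 1 : (proj R V i).M i)))
    (h.elim (tensorProjAugmentation i M)
      (homOfMapEqZero (tensor_vertexRep_map i _) (vertexRep_map i) fun _ => 0))
  simp only [tensorProjAugmentation_app_tmul_nil] at hsingle
  exact hm (Finsupp.single_eq_zero.mp hsingle)

end VertexRep

end QuivRep

/-- Let `Q` be a connected finite acyclic quiver with at
least two vertices over a nonzero commutative ring `R`, and let `s` be a
source.  Then `U(s) ⊠ U(s) ≅ U(s)`, but `U(s)` is not rigid: the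
vertexwise components `Hom(U(s) ⊠ P(i), U)` of the internal hom
`[U(s), U]` all vanish (indeed `U(s) ⊠ P(i) = 0` for `i ≠ s`), while
`[U(s), U(s)]` is nonzero since `Hom(U(s) ⊠ P(s), U(s)) ≠ 0`. -/
theorem source_simple_not_rigid
    [Nontrivial R] [Fintype V] [∀ i j : V, Fintype (i ⟶ j)]
    (hacy : Acyclic V)
    (hconn : ∀ i j : Quiver.Symmetrify V, Nonempty (Quiver.Path i j))
    (hcard : 2 ≤ Fintype.card V)
    (s : V) (hs : ∀ j : V, IsEmpty (j ⟶ s)) :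
    Nonempty (tensor R V (vertexRep R V s R) (vertexRep R V s R) ≅ vertexRep R V s R) ∧
    (∀ i : V, i ≠ s → ∀ v : V,
      Subsingleton ((tensor R V (vertexRep R V s R) (proj R V i)).M v)) ∧
    (∀ i : V,
      Subsingleton (tensor R V (vertexRep R V s R) (proj R V i) ⟶ unit R V)) ∧
    ¬ Subsingleton (tensor R V (vertexRep R V s R) (proj R V s) ⟶ vertexRep R V s R) := by
  obtain ⟨j, ⟨a⟩⟩ := exists_arrow_from_source hconn hcard hs
  refine ⟨⟨vertexRepTensorIso s ≪≫ vertexRepCongr s (TensorProduct.lid R R)⟩, ?_,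
    fun _ => subsingleton_hom_tensor_vertexRep_unit a _,
    not_subsingleton_hom_tensor_vertexRep_proj s⟩
  intro i hi
  have := isEmpty_path_to_source hs hi
  exact subsingleton_tensor_vertexRep_proj_M
end
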